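/- Let (p,q) and (r,s) be pairs of coprime integers with |p·s − q·r| = 1 (so that [p,q] and [r,s] are adjacent vertices of the Farey graph). Then a pair of coprime integers (a,b) satisfies both |a·q − b·p| = 1 and |a·s − b·r| = 1 if and only if (a,b) = ±(p+r, q+s) or (a,b) = ±(p−r, q−s). Consequently, every edge of the Farey graph is contained in exactly two triangles, whose third vertices are the two 'mediants' [p+r, q+s] and [p−r, q−s]. -/

import Mathlib

/-- A Farey pair: a pair of coprime integers. -/
abbrev FareyPair : Type := {v : ℤ × ℤ // IsCoprime v.1 v.2}

/-- Identify a coprime pair of integers with its negative. -/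
instance fareySetoid : Setoid FareyPair where
  r a b := a.1 = b.1 ∨ a.1 = -b.1
  iseqv := by
    refine ⟨fun a => Or.inl rfl, ?_, ?_⟩
    · rintro a b (h | h)
      · exact Or.inl h.symm
      · exact Or.inr (by rw [h, neg_neg])
    · rintro a b c (h1 | h1) (h2 | h2)
      · exact Or.inl (h1.trans h2)
      · exact Or.inr (h1.trans h2)
      · exact Or.inr (by rw [h1, h2])
      · exact Or.inl (by rw [h1, h2, neg_neg])

/-- Vertices of the Farey graph: coprime integer pairs up to sign. -/
abbrev FareyVertex : Type := Quotient fareySetoid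

/-- The Farey vertex `[p, q]` determined by a coprime pair `(p, q)`. -/
def fareyMk (p q : ℤ) (h : IsCoprime p q) : FareyVertex :=
  Quotient.mk fareySetoid ⟨(p, q), h⟩

/-- The absolute value of the determinant, descended to Farey vertices. -/
def fareyDetAbs : FareyVertex → FareyVertex → ℤ :=
  Quotient.lift₂ (fun a b : FareyPair => |a.1.1 * b.1.2 - a.1.2 * b.1.1|)
    (by
      rintro a b a' b' (h1 | h1) (h2 | h2)
      · simp only [h1, h2]
      · simp only [h1, h2, Prod.fst_neg, Prod.snd_neg]
        apply abs_eq_abs.mpr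
        right; ring
      · simp only [h1, h2, Prod.fst_neg, Prod.snd_neg]
        apply abs_eq_abs.mpr
        right; ring
      · simp only [h1, h2, Prod.fst_neg, Prod.snd_neg]
        apply abs_eq_abs.mpr
        left; ring)

lemma fareyDetAbs_comm (u v : FareyVertex) : fareyDetAbs u v = fareyDetAbs v u := by
  refine Quotient.inductionOn₂ u v fun a b => ?_
  show |a.1.1 * b.1.2 - a.1.2 * b.1.1| = |b.1.1 * a.1.2 - b.1.2 * a.1.1|
  rw [abs_sub_comm]
  exact congrArg abs (by ring)

/-- The Farey graph: coprime integer pairs up to sign, adjacent when the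
determinant is `±1`. -/
def FareyGraph : SimpleGraph FareyVertex where
  Adj u v := fareyDetAbs u v = 1
  symm := by
    refine ⟨?_⟩
    intro u v h
    rwa [fareyDetAbs_comm]
  loopless := by
    refine ⟨?_⟩
    intro u
    refine Quotient.inductionOn u fun a => ?_
    show ¬(|a.1.1 * a.1.2 - a.1.2 * a.1.1| = 1)
    rw [show a.1.1 * a.1.2 - a.1.2 * a.1.1 = 0 from by ring]
    simp

/-- A pair of integers forming a unimodular matrix with another pair is coprime. -/
lemma coprime_of_det (a b c d : ℤ) (h : |a * d - b * c| = 1) : IsCoprime a b := by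
  rcases (abs_eq (by norm_num : (0:ℤ) ≤ 1)).mp h with h' | h'
  · exact ⟨d, -c, by linear_combination h'⟩
  · exact ⟨-d, c, by linear_combination -h'⟩

/-
Write `D = p s - q r`. Cramer's rule gives `D • (a, b) = (a s - b r) • (p, q) - (a q - b p) • (r, s)`,
so when all three determinants are `±1` the pair `(a, b)` is `±(p, q) ± (r, s)`: one of the
two mediants up to sign. Conversely both mediants have determinant `±D` with `(p, q)` and `(r, s)`.
The two mediants have determinant `±2D = ±2` with each other, so they are distinct vertices.
-/

section Mediant

variable {p q r s a b : ℤ}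

theorem eq_mediant_of_abs_det_eq_one (h : |p * s - q * r| = 1) (hdet_pq : |a * q - b * p| = 1)
    (hdet_rs : |a * s - b * r| = 1) :
    (a, b) = (p + r, q + s) ∨ (a, b) = (-(p + r), -(q + s)) ∨
      (a, b) = (p - r, q - s) ∨ (a, b) = (-(p - r), -(q - s)) := by
  have cramer_fst : a * (p * s - q * r) = p * (a * s - b * r) - r * (a * q - b * p) := by ring
  have cramer_snd : b * (p * s - q * r) = q * (a * s - b * r) - s * (a * q - b * p) := by ring
  simp only [Prod.mk.injEq]
  rcases (abs_eq zero_le_one).mp h with hD | hD <;>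
  rcases (abs_eq zero_le_one).mp hdet_pq with hx | hx <;>
  rcases (abs_eq zero_le_one).mp hdet_rs with hy | hy <;>
  · rw [hD, hx, hy] at cramer_fst cramer_snd
    omega

theorem abs_det_eq_one_of_eq_mediant (h : |p * s - q * r| = 1)
    (hab : (a, b) = (p + r, q + s) ∨ (a, b) = (-(p + r), -(q + s)) ∨
      (a, b) = (p - r, q - s) ∨ (a, b) = (-(p - r), -(q - s))) :
    |a * q - b * p| = 1 ∧ |a * s - b * r| = 1 := by
  rcases hab with hab | hab | hab | hab <;> obtain ⟨rfl, rfl⟩ := Prod.mk.inj hab <;>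
  refine ⟨?_, ?_⟩ <;> rw [← h, abs_eq_abs] <;> first | (left; ring1) | (right; ring1)

theorem abs_det_eq_one_iff_eq_mediant (h : |p * s - q * r| = 1) :
    (|a * q - b * p| = 1 ∧ |a * s - b * r| = 1) ↔
      ((a, b) = (p + r, q + s) ∨ (a, b) = (-(p + r), -(q + s)) ∨
        (a, b) = (p - r, q - s) ∨ (a, b) = (-(p - r), -(q - s))) :=
  ⟨fun ⟨hdet_pq, hdet_rs⟩ => eq_mediant_of_abs_det_eq_one h hdet_pq hdet_rs, abs_det_eq_one_of_eq_mediant h⟩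

end Mediant

section FareyVertex

variable {a b c d : ℤ}

theorem fareyMk_eq_fareyMk_iff (hab : IsCoprime a b) (hcd : IsCoprime c d) :
    fareyMk a b hab = fareyMk c d hcd ↔ (a, b) = (c, d) ∨ (a, b) = (-c, -d) :=
  Quotient.eq

theorem fareyDetAbs_fareyMk (hab : IsCoprime a b) (hcd : IsCoprime c d) :
    fareyDetAbs (fareyMk a b hab) (fareyMk c d hcd) = |a * d - b * c| :=
  rfl

theorem fareyDetAbs_self (u : FareyVertex) : fareyDetAbs u u = 0 :=
  Quotient.inductionOn u fun v => by
    simp only [fareyDetAbs, Quotient.lift₂_mk, mul_comm v.1.1, sub_self, abs_zero]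

theorem fareyGraph_adj_fareyMk_iff (hab : IsCoprime a b) (hcd : IsCoprime c d) :
    FareyGraph.Adj (fareyMk c d hcd) (fareyMk a b hab) ↔ |a * d - b * c| = 1 := by
  rw [FareyGraph.adj_comm]
  exact Iff.rfl

end FareyVertex

/-- If `(p,q)` and `(r,s)` are coprime pairs with `|ps - qr| = 1`
(so `[p,q]` and `[r,s]` are adjacent in the Farey graph), then a coprime pair `(a,b)`
satisfies `|aq - bp| = 1` and `|as - br| = 1` iff `(a,b) = ±(p+r, q+s)` or
`(a,b) = ±(p-r, q-s)`.  Consequently the edge from `[p,q]` to `[r,s]` lies in exactly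
two triangles, whose third vertices are the two mediants `[p+r, q+s]` and `[p-r, q-s]`. -/
theorem farey_edge_in_exactly_two_triangles (p q r s : ℤ)
    (hpq : IsCoprime p q) (hrs : IsCoprime r s) (h : |p * s - q * r| = 1) :
    (∀ a b : ℤ, IsCoprime a b →
      ((|a * q - b * p| = 1 ∧ |a * s - b * r| = 1) ↔
        ((a, b) = (p + r, q + s) ∨ (a, b) = (-(p + r), -(q + s)) ∨
         (a, b) = (p - r, q - s) ∨ (a, b) = (-(p - r), -(q - s))))) ∧
    ∃ (h₁ : IsCoprime (p + r) (q + s)) (h₂ : IsCoprime (p - r) (q - s)),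
      fareyMk (p + r) (q + s) h₁ ≠ fareyMk (p - r) (q - s) h₂ ∧
      {w : FareyVertex | FareyGraph.Adj (fareyMk p q hpq) w ∧
          FareyGraph.Adj (fareyMk r s hrs) w} =
        {fareyMk (p + r) (q + s) h₁, fareyMk (p - r) (q - s) h₂} := by
  have h₁ : IsCoprime (p + r) (q + s) :=
    coprime_of_det _ _ r s ((abs_det_eq_one_of_eq_mediant h (Or.inl rfl)).2)
  have h₂ : IsCoprime (p - r) (q - s) :=
    coprime_of_det _ _ r s ((abs_det_eq_one_of_eq_mediant h (Or.inr (Or.inr (Or.inl rfl)))).2)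
  refine ⟨fun a b _ => abs_det_eq_one_iff_eq_mediant h, h₁, h₂, fun heq => ?_, ?_⟩
  · have hdet : fareyDetAbs (fareyMk (p + r) (q + s) h₁) (fareyMk (p - r) (q - s) h₂) = 0 := by
      rw [heq, fareyDetAbs_self]
    rw [fareyDetAbs_fareyMk, show (p + r) * (q - s) - (q + s) * (p - r) = -2 * (p * s - q * r) by ring,
      abs_mul, h] at hdet
    norm_num at hdet
  · ext w
    induction w using Quotient.inductionOn with | h v => ?_
    obtain ⟨⟨a, b⟩, hab⟩ := v
    change FareyGraph.Adj _ (fareyMk a b hab) ∧ FareyGraph.Adj _ (fareyMk a b hab) ↔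
      fareyMk a b hab = _ ∨ fareyMk a b hab = _
    rw [fareyGraph_adj_fareyMk_iff, fareyGraph_adj_fareyMk_iff, abs_det_eq_one_iff_eq_mediant h,
      fareyMk_eq_fareyMk_iff, fareyMk_eq_fareyMk_iff, or_assoc]
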